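/- Latent-factor monotonicity (strict, via size): Let Γ ∈ ℝ^{p×p} be symmetric PSD and β ∈ ℝ^p a nonzero vector with ‖β‖ = 1. If a > ‖Γ‖₂, then the map t ↦ ‖tββᵀ + Γ‖₂ is strictly increasing at every t ≥ a; in particular ‖a'ββᵀ + Γ‖₂ > ‖aββᵀ + Γ‖₂ whenever a' > a > ‖Γ‖₂. -/

import Mathlib

open Matrix MeasureTheory ProbabilityTheory BigOperators Filter

/-- The spectral norm (operator 2-norm) of a real matrix. -/
noncomputable def spec {p : ℕ} (A : Matrix (Fin p) (Fin p) ℝ) : ℝ :=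
  ‖LinearMap.toContinuousLinearMap (Matrix.toEuclideanLin A)‖

noncomputable def frob {p : ℕ} (A : Matrix (Fin p) (Fin p) ℝ) : ℝ :=
  Real.sqrt (∑ i, ∑ j, (A i j) ^ 2)

/-!
With `M t = t • ββᵀ + Γ`, all `M t` for `t ≥ 0` are positive semidefinite, so `‖M s‖₂ = ⟪M s x, x⟫`
for some unit vector `x`. Testing `M s` against `β` gives `‖M s‖₂ ≥ s > ‖Γ‖₂ ≥ ⟪Γ x, x⟫`, which
forces `⟪β, x⟫² > 0`; hence `‖M t‖₂ ≥ ⟪M t x, x⟫ = ‖M s‖₂ + (t - s) ⟪β, x⟫² > ‖M s‖₂` for `t > s`.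
-/

open scoped RealInnerProductSpace

namespace ContinuousLinearMap

variable {E : Type*} [NormedAddCommGroup E] [InnerProductSpace ℝ E]

theorem real_inner_apply_self_le_norm (T : E →L[ℝ] E) {x : E} (hx : ‖x‖ = 1) :
    ⟪T x, x⟫ ≤ ‖T‖ := by
  simpa [hx, rayleighQuotient, reApplyInnerSelf_apply] using
    (abs_le.mp (T.rayleighQuotient_le_norm x)).2

theorem IsPositive.exists_real_inner_apply_self_eq_norm [FiniteDimensional ℝ E] [Nontrivial E]
    {T : E →L[ℝ] E} (hT : T.IsPositive) : ∃ x, ‖x‖ = 1 ∧ ⟪T x, x⟫ = ‖T‖ := by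
  obtain ⟨x₀, hx₀, hmax⟩ := (isCompact_sphere (0 : E) 1).exists_isMaxOn
    (NormedSpace.sphere_nonempty.mpr zero_le_one) T.reApplyInnerSelf_continuous.continuousOn
  have hx₀ : ‖x₀‖ = 1 := by simpa using hx₀
  refine ⟨x₀, hx₀, le_antisymm (T.real_inner_apply_self_le_norm hx₀) ?_⟩
  rw [norm_eq_iSup_rayleighQuotient T hT.isSymmetric]
  refine ciSup_le fun x => ?_
  rcases eq_or_ne x 0 with rfl | hx
  · simpa using hT.re_inner_nonneg_left x₀
  have hx' : ‖x‖⁻¹ ≠ 0 := by simpa using hx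
  rw [abs_of_nonneg (by have := hT.2 x; positivity), ← T.rayleigh_smul x (c := ‖x‖⁻¹) hx']
  have hunit : ‖‖x‖⁻¹ • x‖ = 1 := norm_smul_inv_norm hx
  simpa [hunit, rayleighQuotient, reApplyInnerSelf_apply] using
    hmax (show ‖x‖⁻¹ • x ∈ Metric.sphere (0 : E) 1 by simpa using hunit)

theorem IsPositive.norm_smul_add_lt_norm_smul_add [FiniteDimensional ℝ E] {P T : E →L[ℝ] E}
    (hP : P.IsPositive) (hT : T.IsPositive) {s t : ℝ} (hs : ‖T‖ < s * ‖P‖) (hst : s < t) :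
    ‖s • P + T‖ < ‖t • P + T‖ := by
  have hs0 : 0 < s := pos_of_mul_pos_left ((norm_nonneg T).trans_lt hs) (norm_nonneg P)
  have : Nontrivial E := by
    obtain ⟨y, hy⟩ : ∃ y, P y ≠ 0 := DFunLike.ne_iff.mp
      (norm_pos_iff.mp (pos_of_mul_pos_right ((norm_nonneg T).trans_lt hs) hs0.le))
    exact nontrivial_of_ne y 0 fun h => hy (by simp [h])
  have expand (r : ℝ) (y : E) : ⟪(r • P + T) y, y⟫ = r * ⟪P y, y⟫ + ⟪T y, y⟫ := by
    simp [inner_add_left, real_inner_smul_left]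
  obtain ⟨b, hb, hPb⟩ := hP.exists_real_inner_apply_self_eq_norm
  obtain ⟨x, hx, hSx⟩ :=
    ((hP.smul_of_nonneg hs0.le).add hT).exists_real_inner_apply_self_eq_norm
  have hlower : s * ‖P‖ ≤ ‖s • P + T‖ := by
    have := (s • P + T).real_inner_apply_self_le_norm hb
    nlinarith [expand s b, hT.inner_nonneg_left b]
  rw [expand] at hSx
  have hPx : 0 < ⟪P x, x⟫ := by
    have hTx := T.real_inner_apply_self_le_norm hx
    exact pos_of_mul_pos_right (by linarith) hs0.le
  calc ‖s • P + T‖ = s * ⟪P x, x⟫ + ⟪T x, x⟫ := hSx.symm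
    _ < t * ⟪P x, x⟫ + ⟪T x, x⟫ := by gcongr
    _ = ⟪(t • P + T) x, x⟫ := (expand t x).symm
    _ ≤ ‖t • P + T‖ := (t • P + T).real_inner_apply_self_le_norm hx

end ContinuousLinearMap

theorem spec_eq_norm_toEuclideanCLM {p : ℕ} (A : Matrix (Fin p) (Fin p) ℝ) :
    spec A = ‖toEuclideanCLM (𝕜 := ℝ) A‖ := rfl

theorem Matrix.PosSemidef.isPositive_toEuclideanCLM {n : Type*} [Fintype n] [DecidableEq n]
    {A : Matrix n n ℝ} (hA : A.PosSemidef) : (toEuclideanCLM (𝕜 := ℝ) A).IsPositive :=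
  Matrix.isPositive_toEuclideanLin_iff.mpr hA

theorem Matrix.toEuclideanCLM_vecMulVec_self {n : Type*} [Fintype n] [DecidableEq n]
    (v : n → ℝ) :
    toEuclideanCLM (𝕜 := ℝ) (vecMulVec v v) =
      InnerProductSpace.rankOne ℝ (WithLp.toLp 2 v) (WithLp.toLp 2 v) := by
  ext x i
  simp [vecMulVec_apply, mulVec, dotProduct, PiLp.inner_apply, Finset.mul_sum, mul_assoc,
    mul_comm]

theorem spec_smul_vecMulVec_add_lt {p : ℕ} {Γ : Matrix (Fin p) (Fin p) ℝ} (hΓ : Γ.PosSemidef)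
    {β : Fin p → ℝ} (hβ : ∑ i, β i ^ 2 = 1) {s t : ℝ} (hs : spec Γ < s) (hst : s < t) :
    spec (s • vecMulVec β β + Γ) < spec (t • vecMulVec β β + Γ) := by
  have hβ_norm : ‖WithLp.toLp 2 β‖ = 1 := by simp [EuclideanSpace.norm_eq, hβ]
  simp only [spec_eq_norm_toEuclideanCLM, map_add, map_smul,
    toEuclideanCLM_vecMulVec_self] at hs ⊢
  refine (InnerProductSpace.isPositive_rankOne_self _).norm_smul_add_lt_norm_smul_add
    hΓ.isPositive_toEuclideanCLM ?_ hst
  simpa [hβ_norm] using hs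

theorem stmt14_general {p : ℕ} (Γ : Matrix (Fin p) (Fin p) ℝ) (hΓ : Γ.PosSemidef)
    (β : Fin p → ℝ) (hβ : ∑ i, (β i) ^ 2 = 1)
    (a : ℝ) (ha : spec Γ < a) :
    StrictMonoOn (fun t : ℝ => spec (t • Matrix.vecMulVec β β + Γ)) (Set.Ici a) ∧
    ∀ a' : ℝ, a < a' →
      spec (a • Matrix.vecMulVec β β + Γ) < spec (a' • Matrix.vecMulVec β β + Γ) :=
  ⟨fun _ hs _ _ hst => spec_smul_vecMulVec_add_lt hΓ hβ (ha.trans_le hs) hst,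
    fun _ => spec_smul_vecMulVec_add_lt hΓ hβ ha⟩

/-- Latent-factor monotonicity (strict, via size): for a unit vector `β` and symmetric PSD `Γ`,
if `a > ‖Γ‖₂`, then `t ↦ ‖t ββᵀ + Γ‖₂` is strictly increasing on `[a, ∞)`; in particular
`‖a' ββᵀ + Γ‖₂ > ‖a ββᵀ + Γ‖₂` whenever `a' > a > ‖Γ‖₂`. -/
theorem stmt14 {p : ℕ} (Γ : Matrix (Fin p) (Fin p) ℝ) (hΓ : Γ.PosSemidef)
    (β : Fin p → ℝ) (hβ0 : β ≠ 0) (hβ : ∑ i, (β i) ^ 2 = 1)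
    (a : ℝ) (ha : spec Γ < a) :
    StrictMonoOn (fun t : ℝ => spec (t • Matrix.vecMulVec β β + Γ)) (Set.Ici a) ∧
    ∀ a' : ℝ, a < a' →
      spec (a • Matrix.vecMulVec β β + Γ) < spec (a' • Matrix.vecMulVec β β + Γ) :=
  stmt14_general Γ hΓ β hβ a ha
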